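/- Let ν be a probability measure on ℝ and let f := ν ∗ φ be the Gaussian mixture density. Then for every y ∈ ℝ, (f'(y))² ≤ f(y)² · log(1/(2π f(y)²)); equivalently, (f'(y)/f(y))² ≤ log(1/(2π f(y)²)). -/

import Mathlib

open MeasureTheory Real Filter

lemma ptwise (b t : ℝ) : (b * t - b ^ 2 + 1) * Real.exp (-(t ^ 2) / 2) ≤ Real.exp (-(b ^ 2) / 2) := by
  have h1 : Real.exp (-(b ^ 2) / 2) = Real.exp ((t ^ 2 - b ^ 2) / 2) * Real.exp (-(t ^ 2) / 2) := by
    rw [← Real.exp_add]; ring_nf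
  rcases le_or_gt (b * t - b ^ 2 + 1) 0 with h | h
  · have h2 := Real.exp_pos (-(b ^ 2) / 2)
    have h3 := Real.exp_pos (-(t ^ 2) / 2)
    nlinarith
  · rw [h1]
    have h2 : (t ^ 2 - b ^ 2) / 2 + 1 ≤ Real.exp ((t ^ 2 - b ^ 2) / 2) := Real.add_one_le_exp _
    have h3 : b * t - b ^ 2 + 1 ≤ (t ^ 2 - b ^ 2) / 2 + 1 := by nlinarith [sq_nonneg (t - b)]
    have he := Real.exp_pos (-(t ^ 2) / 2)
    nlinarith

lemma abs_texp_le (t : ℝ) : |t * Real.exp (-(t ^ 2) / 2)| ≤ 1 := by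
  have h : |t| ≤ Real.exp (t ^ 2 / 2) := by
    have h2 := Real.add_one_le_exp (t ^ 2 / 2)
    nlinarith [sq_nonneg (|t| - 1), sq_abs t]
  have he := Real.exp_pos (-(t ^ 2) / 2)
  rw [abs_mul, abs_of_pos he]
  calc |t| * Real.exp (-(t ^ 2) / 2) ≤ Real.exp (t ^ 2 / 2) * Real.exp (-(t ^ 2) / 2) :=
        mul_le_mul_of_nonneg_right h he.le
    _ = 1 := by rw [← Real.exp_add, show t ^ 2 / 2 + -(t ^ 2) / 2 = 0 by ring, Real.exp_zero]

lemma intExp (μ : Measure ℝ) [IsFiniteMeasure μ] :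
    Integrable (fun t => Real.exp (-(t ^ 2) / 2)) μ := by
  apply Integrable.mono' (integrable_const 1)
    (Continuous.aestronglyMeasurable (by continuity))
  filter_upwards with t
  rw [Real.norm_eq_abs, abs_of_pos (Real.exp_pos _)]
  exact Real.exp_le_one_iff.mpr (by nlinarith [sq_nonneg t])

lemma intTExp (μ : Measure ℝ) [IsFiniteMeasure μ] :
    Integrable (fun t => t * Real.exp (-(t ^ 2) / 2)) μ := by
  apply Integrable.mono' (integrable_const 1)
    (Continuous.aestronglyMeasurable (by continuity))
  filter_upwards with t
  exact abs_texp_le t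

lemma core (μ : Measure ℝ) [IsProbabilityMeasure μ] :
    (∫ t, t * Real.exp (-(t ^ 2) / 2) ∂μ) ^ 2 ≤
      (∫ t, Real.exp (-(t ^ 2) / 2) ∂μ) ^ 2 *
        (-(2 * Real.log (∫ t, Real.exp (-(t ^ 2) / 2) ∂μ))) := by
  set A := ∫ t, Real.exp (-(t ^ 2) / 2) ∂μ with hA
  set M := ∫ t, t * Real.exp (-(t ^ 2) / 2) ∂μ with hM
  have hIe := intExp μ
  have hIt := intTExp μ
  have hexp_le_one : ∀ t : ℝ, Real.exp (-(t ^ 2) / 2) ≤ 1 := fun t =>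
    Real.exp_le_one_iff.mpr (by nlinarith [sq_nonneg t])
  have hA1 : A ≤ 1 := by
    calc A ≤ ∫ _t, (1 : ℝ) ∂μ := integral_mono hIe (integrable_const 1) hexp_le_one
      _ = 1 := by simp
  have hA0 : 0 < A := by
    rw [hA, integral_pos_iff_support_of_nonneg (fun t => (Real.exp_pos _).le) hIe]
    have : (Function.support fun t : ℝ => Real.exp (-(t ^ 2) / 2)) = Set.univ := by
      ext t; simp [Function.support, (Real.exp_pos _).ne']
    rw [this]; simp
  have hlog : Real.log A ≤ 0 := Real.log_nonpos hA0.le hA1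
  set b := Real.sqrt (-(2 * Real.log A)) with hb
  have hb2 : b ^ 2 = -(2 * Real.log A) := Real.sq_sqrt (by linarith)
  have key : ∀ c : ℝ, c ^ 2 = b ^ 2 → c * M ≤ b ^ 2 * A := by
    intro c hc
    have hintc : Integrable
        (fun t => c * (t * Real.exp (-(t ^ 2) / 2)) - (c ^ 2 - 1) * Real.exp (-(t ^ 2) / 2)) μ :=
      (hIt.const_mul c).sub (hIe.const_mul _)
    have hint : ∫ t, (c * (t * Real.exp (-(t ^ 2) / 2)) -
        (c ^ 2 - 1) * Real.exp (-(t ^ 2) / 2)) ∂μ ≤ A := by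
      calc ∫ t, (c * (t * Real.exp (-(t ^ 2) / 2)) - (c ^ 2 - 1) * Real.exp (-(t ^ 2) / 2)) ∂μ
          ≤ ∫ _t, Real.exp (-(c ^ 2) / 2) ∂μ := by
            apply integral_mono hintc (integrable_const _)
            intro t
            have := ptwise c t
            simp only
            nlinarith [Real.exp_pos (-(t ^ 2) / 2)]
        _ = Real.exp (-(c ^ 2) / 2) := by simp
        _ = A := by
            rw [hc, hb2, show -(-(2 * Real.log A)) / 2 = Real.log A by ring]
            exact Real.exp_log hA0
    rw [integral_sub (hIt.const_mul c) (hIe.const_mul _), integral_const_mul,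
      integral_const_mul, ← hM, ← hA] at hint
    nlinarith [hc]
  have k1 : b * M ≤ b ^ 2 * A := key b rfl
  have k2 : -(b * M) ≤ b ^ 2 * A := by
    have := key (-b) (by ring)
    linarith
  rw [← hb2]
  rcases (Real.sqrt_nonneg _).lt_or_eq with hbpos | hbz
  · have h3 : b ^ 2 * M ^ 2 ≤ b ^ 2 * (A ^ 2 * b ^ 2) := by nlinarith
    exact le_of_mul_le_mul_left h3 (by positivity)
  · -- b = 0 case : A = 1, M = 0
    have hbz' : b = 0 := hbz.symm
    have hlogz : Real.log A = 0 := by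
      have := hb2; rw [hbz'] at this; linarith [this]
    have hA1' : A = 1 := by
      rcases Real.log_eq_zero.mp hlogz with h | h | h
      · linarith
      · exact h
      · linarith
    have hzero : ∫ t, (1 - Real.exp (-(t ^ 2) / 2)) ∂μ = 0 := by
      rw [integral_sub (integrable_const 1) hIe, ← hA, hA1']
      simp
    have hae := (integral_eq_zero_iff_of_nonneg
      (fun t => sub_nonneg.mpr (hexp_le_one t)) ((integrable_const 1).sub hIe)).mp hzero
    have hMz : M = 0 := by
      rw [hM]
      have h0 : (fun t : ℝ => t * Real.exp (-(t ^ 2) / 2)) =ᵐ[μ] fun _ => (0 : ℝ) := by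
        filter_upwards [hae] with t ht
        simp only [Pi.zero_apply] at ht ⊢
        have h1 : Real.exp (-(t ^ 2) / 2) = 1 := by linarith
        have h2 : -(t ^ 2) / 2 = 0 := Real.exp_eq_exp.mp (by rw [h1, Real.exp_zero])
        have h3 : t = 0 := by nlinarith
        simp [h3]
      rw [integral_congr_ae h0]
      simp
    rw [hMz]
    nlinarith [sq_nonneg (A * b), sq_nonneg A, sq_nonneg b, mul_nonneg (sq_nonneg A) (sq_nonneg b)]

/-- The standard normal density. -/
noncomputable def gauss (y : ℝ) : ℝ := (Real.sqrt (2 * Real.pi))⁻¹ * Real.exp (-(y ^ 2) / 2)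

/-- The Gaussian mixture density `f_ν = ν ∗ φ`. -/
noncomputable def mixDens (ν : Measure ℝ) (y : ℝ) : ℝ := ∫ u, gauss (y - u) ∂ν

lemma sqrt_two_pi_pos : 0 < Real.sqrt (2 * Real.pi) := Real.sqrt_pos.mpr (by positivity)

lemma inv_sqrt_two_pi_le_one : (Real.sqrt (2 * Real.pi))⁻¹ ≤ 1 := by
  rw [inv_le_one_iff₀]
  right
  rw [show (1 : ℝ) = Real.sqrt 1 by simp]
  exact Real.sqrt_le_sqrt (by nlinarith [Real.pi_gt_three])

lemma hasDerivAt_gauss (t : ℝ) : HasDerivAt gauss (-t * gauss t) t := by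
  have h1 : HasDerivAt (fun x : ℝ => -(x ^ 2) / 2) (-t) t := by
    have := ((hasDerivAt_pow 2 t).neg).div_const 2
    refine this.congr_deriv ?_
    simp; ring
  have h2 : HasDerivAt (fun x : ℝ => Real.exp (-(x ^ 2) / 2))
      (Real.exp (-(t ^ 2) / 2) * (-t)) t := (Real.hasDerivAt_exp _).comp t h1
  have h3 := h2.const_mul ((Real.sqrt (2 * Real.pi))⁻¹)
  unfold gauss
  exact h3.congr_deriv (by ring)

lemma hasDerivAt_gauss_shift (u x : ℝ) :
    HasDerivAt (fun x => gauss (x - u)) (-(x - u) * gauss (x - u)) x := by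
  have h1 : HasDerivAt (fun x : ℝ => x - u) 1 x := (hasDerivAt_id x).sub_const u
  have := (hasDerivAt_gauss (x - u)).comp x h1
  exact this.congr_deriv (by ring)

lemma abs_mul_gauss_le (t : ℝ) : |t * gauss t| ≤ 1 := by
  unfold gauss
  have h := abs_texp_le t
  have h2 := inv_sqrt_two_pi_le_one
  have h3 := sqrt_two_pi_pos
  calc |t * ((Real.sqrt (2 * Real.pi))⁻¹ * Real.exp (-(t ^ 2) / 2))|
      = (Real.sqrt (2 * Real.pi))⁻¹ * |t * Real.exp (-(t ^ 2) / 2)| := by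
        rw [show t * ((Real.sqrt (2 * Real.pi))⁻¹ * Real.exp (-(t ^ 2) / 2))
            = (Real.sqrt (2 * Real.pi))⁻¹ * (t * Real.exp (-(t ^ 2) / 2)) by ring,
          abs_mul, abs_of_pos (by positivity)]
    _ ≤ 1 * 1 := by
        apply mul_le_mul h2 h (abs_nonneg _) zero_le_one
    _ = 1 := one_mul 1

lemma gauss_cont : Continuous gauss := by
  unfold gauss; continuity

lemma mix_hasDerivAt (ν : Measure ℝ) [IsProbabilityMeasure ν] (y : ℝ) :
    HasDerivAt (mixDens ν) (∫ u, -(y - u) * gauss (y - u) ∂ν) y := by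
  have hc1 : ∀ x : ℝ, Continuous fun u : ℝ => gauss (x - u) :=
    fun x => gauss_cont.comp (continuous_const.sub continuous_id)
  have hc2 : Continuous fun u : ℝ => -(y - u) * gauss (y - u) :=
    ((continuous_const.sub continuous_id).neg).mul (hc1 y)
  have hFint : Integrable (fun u => gauss (y - u)) ν := by
    apply Integrable.mono' (integrable_const 1) (hc1 y).aestronglyMeasurable
    filter_upwards with u
    rw [Real.norm_eq_abs]
    unfold gauss
    rw [abs_of_pos (by positivity)]
    calc (Real.sqrt (2 * Real.pi))⁻¹ * Real.exp (-((y - u) ^ 2) / 2)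
        ≤ 1 * 1 := mul_le_mul inv_sqrt_two_pi_le_one
          (Real.exp_le_one_iff.mpr (by nlinarith [sq_nonneg (y - u)])) (Real.exp_pos _).le
          zero_le_one
      _ = 1 := one_mul 1
  have key := hasDerivAt_integral_of_dominated_loc_of_deriv_le
    (μ := ν) (F := fun (x : ℝ) (u : ℝ) => gauss (x - u))
    (F' := fun (x : ℝ) (u : ℝ) => -(x - u) * gauss (x - u))
    (x₀ := y) (bound := fun _ => 1) (Metric.ball_mem_nhds y one_pos)
    (Eventually.of_forall fun x => (hc1 x |>.aestronglyMeasurable))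
    hFint hc2.aestronglyMeasurable ?_ (integrable_const 1) ?_
  · exact key.2
  · filter_upwards with u
    intro x _
    rw [Real.norm_eq_abs, neg_mul, abs_neg]
    exact abs_mul_gauss_le (x - u)
  · filter_upwards with u
    intro x _
    exact hasDerivAt_gauss_shift u x

theorem score_bound (ν : Measure ℝ) [IsProbabilityMeasure ν] (y : ℝ) :
    deriv (mixDens ν) y ^ 2 ≤
      mixDens ν y ^ 2 * Real.log (1 / (2 * Real.pi * mixDens ν y ^ 2)) := by
  set c := (Real.sqrt (2 * Real.pi))⁻¹ with hcdef
  have hc0 : 0 < c := inv_pos.mpr sqrt_two_pi_pos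
  have hc2 : c ^ 2 * (2 * Real.pi) = 1 := by
    have hs : Real.sqrt (2 * Real.pi) ^ 2 = 2 * Real.pi :=
      Real.sq_sqrt (by positivity)
    rw [hcdef, ← hs]
    field_simp
    rw [Real.sqrt_sq (Real.sqrt_nonneg _)]
  have hφ : Measurable (fun u : ℝ => y - u) := (measurable_const.sub measurable_id)
  set μ := ν.map (fun u : ℝ => y - u) with hμdef
  haveI : IsProbabilityMeasure μ := Measure.isProbabilityMeasure_map hφ.aemeasurable
  have hAmap : ∫ t, Real.exp (-(t ^ 2) / 2) ∂μ
      = ∫ u, Real.exp (-((y - u) ^ 2) / 2) ∂ν := by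
    rw [hμdef, integral_map hφ.aemeasurable (Continuous.aestronglyMeasurable (by continuity))]
  have hMmap : ∫ t, t * Real.exp (-(t ^ 2) / 2) ∂μ
      = ∫ u, (y - u) * Real.exp (-((y - u) ^ 2) / 2) ∂ν := by
    rw [hμdef, integral_map hφ.aemeasurable (Continuous.aestronglyMeasurable (by continuity))]
  set A := ∫ u, Real.exp (-((y - u) ^ 2) / 2) ∂ν with hAdef
  set M := ∫ u, (y - u) * Real.exp (-((y - u) ^ 2) / 2) ∂ν with hMdef
  have hcore : M ^ 2 ≤ A ^ 2 * (-(2 * Real.log A)) := by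
    have h := core μ
    rw [hAmap, hMmap] at h
    exact h
  have hF : mixDens ν y = c * A := by
    unfold mixDens gauss
    rw [← integral_const_mul]
  have hD : deriv (mixDens ν) y = c * (-M) := by
    rw [(mix_hasDerivAt ν y).deriv]
    calc ∫ u, -(y - u) * gauss (y - u) ∂ν
        = ∫ u, c * (-((y - u) * Real.exp (-((y - u) ^ 2) / 2))) ∂ν := by
          apply integral_congr_ae
          filter_upwards with u
          unfold gauss
          ring
      _ = c * (-M) := by rw [integral_const_mul, ← integral_neg]
  rw [hF, hD]
  have hlogeq : Real.log (1 / (2 * Real.pi * (c * A) ^ 2)) = -(2 * Real.log A) := by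
    have h2 : 2 * Real.pi * (c * A) ^ 2 = A ^ 2 := by linear_combination A ^ 2 * hc2
    rw [h2, one_div, Real.log_inv, Real.log_pow]
    push_cast
    ring
  rw [hlogeq]
  calc (c * -M) ^ 2 = c ^ 2 * M ^ 2 := by ring
    _ ≤ c ^ 2 * (A ^ 2 * (-(2 * Real.log A))) :=
        mul_le_mul_of_nonneg_left hcore (sq_nonneg c)
    _ = (c * A) ^ 2 * (-(2 * Real.log A)) := by ring
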